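/- Let ρ1 and ρ2 be n×n positive definite density matrices with eigenvalues λ_1(ρ1) ≥ … ≥ λ_n(ρ1) and λ_1(ρ2) ≥ … ≥ λ_n(ρ2). Then for every n×n unitary U, Σ_{j=1}^n λ_j(ρ1) log(λ_j(ρ1)/λ_j(ρ2)) ≤ S(ρ1 || Uρ2U†) ≤ Σ_{j=1}^n λ_j(ρ1) log(λ_j(ρ1)/λ_{n−j+1}(ρ2)), and both bounds are attained for suitable unitary matrices U. -/

import Mathlib

open Matrix
open scoped ComplexOrder Classical

/-- The vector of a tuple's entries sorted in decreasing (nonincreasing) order. -/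
noncomputable def sortDec {n : ℕ} (x : Fin n → ℝ) : Fin n → ℝ :=
  fun i => x (Tuple.sort x i.rev)

/-- The eigenvalues of a Hermitian matrix arranged in decreasing order,
`λ(A)`; junk value `0` if `A` is not Hermitian. -/
noncomputable def eigsDec {n : ℕ} (A : Matrix (Fin n) (Fin n) ℂ) : Fin n → ℝ :=
  if hA : A.IsHermitian then sortDec hA.eigenvalues else 0

/-- The eigenvalues of a Hermitian matrix arranged in increasing order. -/
noncomputable def eigsInc {n : ℕ} (A : Matrix (Fin n) (Fin n) ℂ) : Fin n → ℝ :=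
  fun i => eigsDec A i.rev

/-- `Λ↓(A)`: the diagonal matrix of the eigenvalues of `A` in decreasing order. -/
noncomputable def LambdaDown {n : ℕ} (A : Matrix (Fin n) (Fin n) ℂ) :
    Matrix (Fin n) (Fin n) ℂ :=
  Matrix.diagonal fun i => (eigsDec A i : ℂ)

/-- `Λ↑(A)`: the diagonal matrix of the eigenvalues of `A` in increasing order. -/
noncomputable def LambdaUp {n : ℕ} (A : Matrix (Fin n) (Fin n) ℂ) :
    Matrix (Fin n) (Fin n) ℂ :=
  Matrix.diagonal fun i => (eigsInc A i : ℂ)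

/-- `x ≺ y`: the sum of the `k` largest entries of `x` is at most that of `y`
for every `k`, with equality of the total sums. -/
def Majorizes {n : ℕ} (x y : Fin n → ℝ) : Prop :=
  (∀ k : ℕ, ∑ i ∈ Finset.univ.filter (fun i : Fin n => (i : ℕ) < k), sortDec x i ≤
      ∑ i ∈ Finset.univ.filter (fun i : Fin n => (i : ℕ) < k), sortDec y i) ∧
    (∑ i, x i) = ∑ i, y i

/-- A function `d` is Schur-convex if `x ≺ y` implies `d x ≤ d y`. -/
def SchurConvex {n : ℕ} (d : (Fin n → ℝ) → ℝ) : Prop :=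
  ∀ x y : Fin n → ℝ, Majorizes x y → d x ≤ d y

/-- A density matrix: positive semidefinite with trace one. -/
def IsDensityMatrix {n : ℕ} (ρ : Matrix (Fin n) (Fin n) ℂ) : Prop :=
  ρ.PosSemidef ∧ ρ.trace = 1

/-- A quantum channel: completely positive trace preserving map in Kraus form. -/
def IsQuantumChannel {n : ℕ}
    (Φ : Matrix (Fin n) (Fin n) ℂ → Matrix (Fin n) (Fin n) ℂ) : Prop :=
  ∃ (r : ℕ) (F : Fin r → Matrix (Fin n) (Fin n) ℂ),
    (∑ j, (F j)ᴴ * F j) = 1 ∧ ∀ X, Φ X = ∑ j, F j * X * (F j)ᴴ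

/-- A unital quantum channel. -/
def IsUnitalChannel {n : ℕ}
    (Φ : Matrix (Fin n) (Fin n) ℂ → Matrix (Fin n) (Fin n) ℂ) : Prop :=
  IsQuantumChannel Φ ∧ Φ 1 = 1

/-- A mixed unitary channel: a convex combination of unitary conjugations. -/
def IsMixedUnitaryChannel {n : ℕ}
    (Φ : Matrix (Fin n) (Fin n) ℂ → Matrix (Fin n) (Fin n) ℂ) : Prop :=
  ∃ (r : ℕ) (t : Fin r → ℝ) (U : Fin r → Matrix (Fin n) (Fin n) ℂ),
    (∀ j, 0 ≤ t j) ∧ (∑ j, t j) = 1 ∧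
      (∀ j, U j ∈ Matrix.unitaryGroup (Fin n) ℂ) ∧
      ∀ X, Φ X = ∑ j, (t j : ℂ) • (U j * X * (U j)ᴴ)

/-- Functional calculus: `f(A)` for a Hermitian matrix `A`, via the spectral theorem;
junk value `0` if `A` is not Hermitian. -/
noncomputable def matFun {n : ℕ} (f : ℝ → ℝ) (A : Matrix (Fin n) (Fin n) ℂ) :
    Matrix (Fin n) (Fin n) ℂ :=
  if hA : A.IsHermitian then
    (hA.eigenvectorUnitary : Matrix (Fin n) (Fin n) ℂ) *
      Matrix.diagonal (fun i => (f (hA.eigenvalues i) : ℂ)) *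
      (hA.eigenvectorUnitary : Matrix (Fin n) (Fin n) ℂ)ᴴ
  else 0

/-- `|A| = (AᴴA)^{1/2}`. -/
noncomputable def matAbs {n : ℕ} (A : Matrix (Fin n) (Fin n) ℂ) :
    Matrix (Fin n) (Fin n) ℂ :=
  (Matrix.posSemidef_conjTranspose_mul_self A).1.eigenvectorUnitary.1 *
    Matrix.diagonal ((↑) ∘ (Real.sqrt ·) ∘
      (Matrix.posSemidef_conjTranspose_mul_self A).1.eigenvalues) *
    (star (Matrix.posSemidef_conjTranspose_mul_self A).1.eigenvectorUnitary :
      Matrix (Fin n) (Fin n) ℂ)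

/-- `tr|A|`, the sum of the singular values of `A`. -/
noncomputable def traceAbs {n : ℕ} (A : Matrix (Fin n) (Fin n) ℂ) : ℝ :=
  ((matAbs A).trace).re

/-- The singular values of `A` in decreasing order. -/
noncomputable def singVals {n : ℕ} (A : Matrix (Fin n) (Fin n) ℂ) : Fin n → ℝ :=
  eigsDec (matAbs A)

/-- The positive semidefinite square root of a PSD matrix (junk value `0` otherwise). -/
noncomputable def matSqrt {n : ℕ} (A : Matrix (Fin n) (Fin n) ℂ) :
    Matrix (Fin n) (Fin n) ℂ :=
  if hA : A.PosSemidef then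
    hA.1.eigenvectorUnitary.1 * Matrix.diagonal ((↑) ∘ (Real.sqrt ·) ∘ hA.1.eigenvalues) *
      (star hA.1.eigenvectorUnitary : Matrix (Fin n) (Fin n) ℂ)
  else 0

/-- The fidelity `F(ρ,σ) = tr|ρ^{1/2} σ^{1/2}|`. -/
noncomputable def fidelity {n : ℕ} (ρ σ : Matrix (Fin n) (Fin n) ℂ) : ℝ :=
  traceAbs (matSqrt ρ * matSqrt σ)

/-- The relative entropy `S(ρ‖σ) = tr(ρ (log ρ - log σ))`. -/
noncomputable def relEntropy {n : ℕ} (ρ σ : Matrix (Fin n) (Fin n) ℂ) : ℝ :=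
  ((ρ * (matFun Real.log ρ - matFun Real.log σ)).trace).re

/-- The (real) trace of a matrix whose trace is real. -/
noncomputable def trR {n : ℕ} (A : Matrix (Fin n) (Fin n) ℂ) : ℝ := A.trace.re

/-!
Diagonalize `ρ₁ = V diag(α) V†` and `ρ₂ = W diag(μ) W†`. For a unitary `U`,
`S(ρ₁ ‖ U ρ₂ U†) = Σ αᵢ log αᵢ - Σᵢⱼ αᵢ log μⱼ |Xᵢⱼ|²` with `X = V† U W` unitary, so `(|Xᵢⱼ|²)`
is doubly stochastic. By Birkhoff's theorem the bilinear term is a convex combination of its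
values `Σ αᵢ log μ_{σ i}` at permutations, which by the rearrangement inequality lie between the
antitone and the monotone pairing of the sorted spectra (`log` preserves the order of the `μⱼ`).
Both pairings are realized by `U = V P W†` with `P` a permutation matrix.
-/

open Equiv

section Sorting

variable {n : ℕ}

noncomputable def sortDecPerm (x : Fin n → ℝ) : Perm (Fin n) :=
  Fin.revPerm.trans (Tuple.sort x)

lemma sortDec_eq_comp (x : Fin n → ℝ) : sortDec x = x ∘ sortDecPerm x := rfl

lemma antitone_sortDec (x : Fin n → ℝ) : Antitone (sortDec x) := fun _ _ h =>
  Tuple.monotone_sort x (Fin.rev_anti h)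

lemma sortDec_comp_of_monotoneOn {g : ℝ → ℝ} (x : Fin n → ℝ)
    (hg : MonotoneOn g (Set.range x)) : sortDec (g ∘ x) = g ∘ sortDec x := by
  have hmono : Monotone ((g ∘ x) ∘ Tuple.sort x) := fun _ _ h =>
    hg (Set.mem_range_self _) (Set.mem_range_self _) (Tuple.monotone_sort x h)
  ext i
  exact (congrFun (Tuple.comp_sort_eq_comp_iff_monotone.mpr hmono) i.rev).symm

lemma sortDec_dotProduct_comp (a b : Fin n → ℝ) (τ : Perm (Fin n)) :
    sortDec a ⬝ᵥ (sortDec b ∘ τ) =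
      a ⬝ᵥ (b ∘ (sortDecPerm a).symm.trans (τ.trans (sortDecPerm b))) := by
  rw [sortDec_eq_comp, sortDec_eq_comp, ← dotProduct_comp_equiv_symm]
  rfl

lemma exists_perm_dotProduct_comp_eq (a b : Fin n → ℝ) (τ : Perm (Fin n)) :
    ∃ σ : Perm (Fin n), a ⬝ᵥ (b ∘ σ) = sortDec a ⬝ᵥ (sortDec b ∘ τ) :=
  ⟨_, (sortDec_dotProduct_comp a b τ).symm⟩

lemma dotProduct_comp_perm_mem_Icc (a b : Fin n → ℝ) (σ : Perm (Fin n)) :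
    a ⬝ᵥ (b ∘ σ) ∈ Set.Icc (sortDec a ⬝ᵥ (sortDec b ∘ Fin.rev)) (sortDec a ⬝ᵥ sortDec b) := by
  set τ := (sortDecPerm a).trans (σ.trans (sortDecPerm b).symm)
  have hσ : a ⬝ᵥ (b ∘ σ) = sortDec a ⬝ᵥ (sortDec b ∘ τ) := by
    rw [sortDec_dotProduct_comp]
    congr
    ext i
    simp [τ]
  rw [hσ]
  constructor
  · have hanti := (antitone_sortDec a).antivary
      (Antitone.comp (antitone_sortDec b) Fin.rev_anti)
    simpa [dotProduct] using hanti.sum_mul_le_sum_mul_comp_perm (σ := τ.trans Fin.revPerm)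
  · exact ((antitone_sortDec a).monovary (antitone_sortDec b)).sum_mul_comp_perm_le_sum_mul

end Sorting

section DoublyStochastic

variable {m : Type*} [DecidableEq m]

lemma map_normSq_permMatrix (σ : Perm m) :
    (σ.permMatrix ℂ).map Complex.normSq = σ.permMatrix ℝ := by
  ext i j
  simp only [map_apply, Perm.permMatrix, PEquiv.toMatrix_apply]
  split_ifs <;> simp

variable [Fintype m]

lemma permMatrix_mem_unitaryGroup (σ : Perm m) : σ.permMatrix ℂ ∈ unitaryGroup m ℂ := by
  rw [mem_unitaryGroup_iff, star_eq_conjTranspose, conjTranspose_permMatrix, ← permMatrix_mul,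
    inv_mul_cancel, permMatrix_one]

lemma dotProduct_mulVec_mem_of_mem_doublyStochastic {a b : m → ℝ} {s : Set ℝ}
    (hs : Convex ℝ s) (hperm : ∀ σ : Perm m, a ⬝ᵥ (b ∘ σ) ∈ s) {d : Matrix m m ℝ}
    (hd : d ∈ doublyStochastic ℝ m) : a ⬝ᵥ (d *ᵥ b) ∈ s := by
  obtain ⟨w, hw0, hw1, rfl⟩ := exists_eq_sum_perm_of_mem_doublyStochastic hd
  have hlin : a ⬝ᵥ ((∑ σ, w σ • σ.permMatrix ℝ) *ᵥ b) = ∑ σ, w σ • (a ⬝ᵥ (b ∘ σ)) := by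
    simp [Matrix.sum_mulVec, Matrix.smul_mulVec, dotProduct_sum, permMatrix_mulVec]
  rw [hlin]
  exact hs.sum_mem (fun σ _ => hw0 σ) hw1 (fun σ _ => hperm σ)

lemma map_normSq_mem_doublyStochastic {X : Matrix m m ℂ} (hX : X ∈ unitaryGroup m ℂ) :
    X.map Complex.normSq ∈ doublyStochastic ℝ m := by
  have hrows : X * Xᴴ = 1 := Unitary.mul_star_self_of_mem hX
  have hcols : Xᴴ * X = 1 := Unitary.star_mul_self_of_mem hX
  rw [mem_doublyStochastic_iff_sum]
  refine ⟨fun i j => Complex.normSq_nonneg _, fun i => ?_, fun j => ?_⟩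
  · have := congrFun (congrFun hrows i) i
    simp only [mul_apply, conjTranspose_apply, Complex.star_def, Complex.mul_conj,
      one_apply_eq] at this
    simp only [map_apply]
    exact_mod_cast this
  · have := congrFun (congrFun hcols j) j
    simp only [mul_apply, conjTranspose_apply, Complex.star_def, mul_comm _ (X _ _),
      Complex.mul_conj, one_apply_eq] at this
    simp only [map_apply]
    exact_mod_cast this

end DoublyStochastic

section SpectralDecomposition

variable {m : Type*} [Fintype m] [DecidableEq m]

lemma Matrix.IsHermitian.eq_conj_diagonal {A : Matrix m m ℂ} (hA : A.IsHermitian) :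
    A = (hA.eigenvectorUnitary : Matrix m m ℂ) * diagonal (fun i => (hA.eigenvalues i : ℂ)) *
      (hA.eigenvectorUnitary : Matrix m m ℂ)ᴴ := by
  conv_lhs => rw [hA.spectral_theorem, Unitary.conjStarAlgAut_apply, star_eq_conjTranspose]
  rfl

lemma re_trace_conj_diagonal_mul_conj_diagonal (V W : Matrix m m ℂ) (a b : m → ℝ) :
    (V * diagonal (fun i => (a i : ℂ)) * Vᴴ *
        (W * diagonal (fun i => (b i : ℂ)) * Wᴴ)).trace.re =
      a ⬝ᵥ ((Vᴴ * W).map Complex.normSq *ᵥ b) := by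
  set X := Vᴴ * W
  have hcycle : (V * diagonal (fun i => (a i : ℂ)) * Vᴴ *
        (W * diagonal (fun i => (b i : ℂ)) * Wᴴ)).trace =
      (diagonal (fun i => (a i : ℂ)) * X * diagonal (fun i => (b i : ℂ)) * Xᴴ).trace := by
    rw [conjTranspose_mul, conjTranspose_conjTranspose]
    simp only [X, Matrix.mul_assoc]
    rw [trace_mul_comm]
    simp only [Matrix.mul_assoc]
  have hdiag (i : m) :
      (diagonal (fun i => (a i : ℂ)) * X * diagonal (fun i => (b i : ℂ)) * Xᴴ) i i =
        ((a i * ∑ j, Complex.normSq (X i j) * b j : ℝ) : ℂ) := by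
    rw [mul_apply]
    push_cast
    rw [Finset.mul_sum]
    refine Finset.sum_congr rfl fun j _ => ?_
    simp only [mul_diagonal, diagonal_mul, conjTranspose_apply, Complex.star_def,
      ← Complex.mul_conj]
    ring
  rw [hcycle, trace]
  simp only [diag_apply, hdiag, ← Complex.ofReal_sum, Complex.ofReal_re]
  rfl

end SpectralDecomposition

section RelativeEntropy

variable {n : ℕ}

lemma matFun_eq_cfc (f : ℝ → ℝ) {A : Matrix (Fin n) (Fin n) ℂ} (hA : A.IsHermitian) :
    matFun f A = cfc f A := by
  rw [matFun, dif_pos hA, hA.cfc_eq, IsHermitian.cfc, Unitary.conjStarAlgAut_apply,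
    star_eq_conjTranspose]
  rfl

lemma matFun_of_isHermitian (f : ℝ → ℝ) {A : Matrix (Fin n) (Fin n) ℂ} (hA : A.IsHermitian) :
    matFun f A = (hA.eigenvectorUnitary : Matrix (Fin n) (Fin n) ℂ) *
      diagonal (fun i => (f (hA.eigenvalues i) : ℂ)) *
        (hA.eigenvectorUnitary : Matrix (Fin n) (Fin n) ℂ)ᴴ :=
  dif_pos hA

lemma matFun_unitary_conj (f : ℝ → ℝ) {A U : Matrix (Fin n) (Fin n) ℂ} (hA : A.IsHermitian)
    (hU : U ∈ unitaryGroup (Fin n) ℂ) : matFun f (U * A * Uᴴ) = U * matFun f A * Uᴴ := by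
  rw [matFun_eq_cfc f (isHermitian_mul_mul_conjTranspose U hA), matFun_eq_cfc f hA]
  have := StarAlgHomClass.map_cfc (S := ℂ) (Unitary.conjStarAlgAut ℂ _ ⟨U, hU⟩) f A
    (A.finite_real_spectrum.continuousOn f)
    (show Continuous fun X => U * X * star U by fun_prop)
  simpa [star_eq_conjTranspose] using this.symm

lemma relEntropy_unitary_conj {A B U : Matrix (Fin n) (Fin n) ℂ} (hA : A.IsHermitian)
    (hB : B.IsHermitian) (hU : U ∈ unitaryGroup (Fin n) ℂ) :
    relEntropy A (U * B * Uᴴ) = hA.eigenvalues ⬝ᵥ (Real.log ∘ hA.eigenvalues) -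
      hA.eigenvalues ⬝ᵥ (((hA.eigenvectorUnitary : Matrix (Fin n) (Fin n) ℂ)ᴴ *
        (U * hB.eigenvectorUnitary)).map Complex.normSq *ᵥ (Real.log ∘ hB.eigenvalues)) := by
  have hAeq := hA.eq_conj_diagonal
  have hlogA := matFun_of_isHermitian Real.log hA
  have hlogB := matFun_unitary_conj Real.log hB hU
  rw [matFun_of_isHermitian _ hB] at hlogB
  set V : Matrix (Fin n) (Fin n) ℂ := ↑hA.eigenvectorUnitary
  set W : Matrix (Fin n) (Fin n) ℂ := ↑hB.eigenvectorUnitary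
  have hV : Vᴴ * V = 1 := Unitary.coe_star_mul_self _
  have hlogB' : matFun Real.log (U * B * Uᴴ) =
      U * W * diagonal (fun i => (Real.log (hB.eigenvalues i) : ℂ)) * (U * W)ᴴ := by
    rw [hlogB, conjTranspose_mul]
    simp only [Matrix.mul_assoc]
  have hself := re_trace_conj_diagonal_mul_conj_diagonal V V hA.eigenvalues
    (fun i => Real.log (hA.eigenvalues i))
  have hcross := re_trace_conj_diagonal_mul_conj_diagonal V (U * W) hA.eigenvalues
    (fun i => Real.log (hB.eigenvalues i))
  rw [← hAeq] at hself hcross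
  rw [relEntropy, Matrix.mul_sub, trace_sub, Complex.sub_re, hlogA, hlogB', hself, hcross, hV,
    Matrix.map_one _ (map_zero _) (map_one _), one_mulVec]
  rfl

lemma exists_unitary_relEntropy_conj_eq {A B : Matrix (Fin n) (Fin n) ℂ} (hA : A.IsHermitian)
    (hB : B.IsHermitian) (σ : Perm (Fin n)) :
    ∃ U ∈ unitaryGroup (Fin n) ℂ, relEntropy A (U * B * Uᴴ) =
      hA.eigenvalues ⬝ᵥ (Real.log ∘ hA.eigenvalues) -
        hA.eigenvalues ⬝ᵥ (Real.log ∘ hB.eigenvalues ∘ σ) := by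
  set V : Matrix (Fin n) (Fin n) ℂ := ↑hA.eigenvectorUnitary
  set W : Matrix (Fin n) (Fin n) ℂ := ↑hB.eigenvectorUnitary
  have hV : Vᴴ * V = 1 := Unitary.coe_star_mul_self _
  have hW : Wᴴ * W = 1 := Unitary.coe_star_mul_self _
  have hU : V * σ.permMatrix ℂ * Wᴴ ∈ unitaryGroup (Fin n) ℂ :=
    mul_mem (mul_mem hA.eigenvectorUnitary.2 (permMatrix_mem_unitaryGroup σ))
      (star hB.eigenvectorUnitary).2
  refine ⟨_, hU, ?_⟩
  rw [relEntropy_unitary_conj hA hB hU]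
  have hX : Vᴴ * (V * σ.permMatrix ℂ * Wᴴ * W) = σ.permMatrix ℂ := by
    simp only [Matrix.mul_assoc, hW, Matrix.mul_one, ← Matrix.mul_assoc Vᴴ, hV, Matrix.one_mul]
  rw [hX, map_normSq_permMatrix, permMatrix_mulVec]
  rfl

lemma eigsDec_of_isHermitian {A : Matrix (Fin n) (Fin n) ℂ} (hA : A.IsHermitian) :
    eigsDec A = sortDec hA.eigenvalues :=
  dif_pos hA

lemma sum_mul_log_div_eigsDec {A B : Matrix (Fin n) (Fin n) ℂ} (hA : A.PosDef) (hB : B.PosDef)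
    (τ : Fin n → Fin n) :
    ∑ j, eigsDec A j * Real.log (eigsDec A j / eigsDec B (τ j)) =
      hA.1.eigenvalues ⬝ᵥ (Real.log ∘ hA.1.eigenvalues) -
        sortDec hA.1.eigenvalues ⬝ᵥ (sortDec (Real.log ∘ hB.1.eigenvalues) ∘ τ) := by
  have hlog : MonotoneOn Real.log (Set.range hB.1.eigenvalues) :=
    Real.strictMonoOn_log.monotoneOn.mono (Set.range_subset_iff.mpr hB.eigenvalues_pos)
  have hentropy : hA.1.eigenvalues ⬝ᵥ (Real.log ∘ hA.1.eigenvalues) =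
      sortDec hA.1.eigenvalues ⬝ᵥ (Real.log ∘ sortDec hA.1.eigenvalues) :=
    (comp_equiv_dotProduct_comp_equiv hA.1.eigenvalues (Real.log ∘ hA.1.eigenvalues)
      (sortDecPerm _)).symm
  rw [eigsDec_of_isHermitian hA.1, eigsDec_of_isHermitian hB.1,
    sortDec_comp_of_monotoneOn _ hlog, hentropy]
  simp only [dotProduct, ← Finset.sum_sub_distrib, Function.comp_apply]
  refine Finset.sum_congr rfl fun j _ => ?_
  have hx : sortDec hA.1.eigenvalues j ≠ 0 := (hA.eigenvalues_pos _).ne'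
  have hy : sortDec hB.1.eigenvalues (τ j) ≠ 0 := (hB.eigenvalues_pos _).ne'
  rw [Real.log_div hx hy, mul_sub]

end RelativeEntropy

theorem stmt_11_general {n : ℕ} (ρ1 ρ2 : Matrix (Fin n) (Fin n) ℂ)
    (h1' : ρ1.PosDef) (h2' : ρ2.PosDef) :
    (∀ U ∈ Matrix.unitaryGroup (Fin n) ℂ,
        (∑ j, eigsDec ρ1 j * Real.log (eigsDec ρ1 j / eigsDec ρ2 j)) ≤
            relEntropy ρ1 (U * ρ2 * Uᴴ) ∧
          relEntropy ρ1 (U * ρ2 * Uᴴ) ≤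
            ∑ j, eigsDec ρ1 j * Real.log (eigsDec ρ1 j / eigsDec ρ2 j.rev)) ∧
      (∃ U ∈ Matrix.unitaryGroup (Fin n) ℂ,
          relEntropy ρ1 (U * ρ2 * Uᴴ) =
            ∑ j, eigsDec ρ1 j * Real.log (eigsDec ρ1 j / eigsDec ρ2 j)) ∧
      ∃ U ∈ Matrix.unitaryGroup (Fin n) ℂ,
        relEntropy ρ1 (U * ρ2 * Uᴴ) =
          ∑ j, eigsDec ρ1 j * Real.log (eigsDec ρ1 j / eigsDec ρ2 j.rev) := by
  have hlower := sum_mul_log_div_eigsDec h1' h2' id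
  have hupper := sum_mul_log_div_eigsDec h1' h2' Fin.rev
  simp only [id, Function.comp_id] at hlower
  refine ⟨fun U hU => ?_, ?_, ?_⟩
  · have hX : (h1'.1.eigenvectorUnitary : Matrix (Fin n) (Fin n) ℂ)ᴴ *
        (U * h2'.1.eigenvectorUnitary) ∈ unitaryGroup (Fin n) ℂ :=
      mul_mem (star h1'.1.eigenvectorUnitary).2 (mul_mem hU h2'.1.eigenvectorUnitary.2)
    have hmem := dotProduct_mulVec_mem_of_mem_doublyStochastic (convex_Icc _ _)
      (dotProduct_comp_perm_mem_Icc h1'.1.eigenvalues (Real.log ∘ h2'.1.eigenvalues))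
      (map_normSq_mem_doublyStochastic hX)
    rw [relEntropy_unitary_conj h1'.1 h2'.1 hU, hlower, hupper]
    exact ⟨by linarith [hmem.2], by linarith [hmem.1]⟩
  · obtain ⟨σ, hσ⟩ := exists_perm_dotProduct_comp_eq h1'.1.eigenvalues
      (Real.log ∘ h2'.1.eigenvalues) (Equiv.refl _)
    obtain ⟨U, hU, hS⟩ := exists_unitary_relEntropy_conj_eq h1'.1 h2'.1 σ
    exact ⟨U, hU, by rw [hS, hlower, ← Function.comp_assoc, hσ]; rfl⟩
  · obtain ⟨σ, hσ⟩ := exists_perm_dotProduct_comp_eq h1'.1.eigenvalues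
      (Real.log ∘ h2'.1.eigenvalues) Fin.revPerm
    obtain ⟨U, hU, hS⟩ := exists_unitary_relEntropy_conj_eq h1'.1 h2'.1 σ
    exact ⟨U, hU, by rw [hS, hupper, ← Function.comp_assoc, hσ]; rfl⟩

/-- Relative-entropy bounds over unitary conjugations, for positive definite
density matrices:
`Σ λ_j(ρ1) log(λ_j(ρ1)/λ_j(ρ2)) ≤ S(ρ1‖U ρ2 Uᴴ) ≤ Σ λ_j(ρ1) log(λ_j(ρ1)/λ_{n-j+1}(ρ2))`,
and both bounds are attained. -/
theorem stmt_11 {n : ℕ} (ρ1 ρ2 : Matrix (Fin n) (Fin n) ℂ)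
    (h1 : IsDensityMatrix ρ1) (h2 : IsDensityMatrix ρ2)
    (h1' : ρ1.PosDef) (h2' : ρ2.PosDef) :
    (∀ U ∈ Matrix.unitaryGroup (Fin n) ℂ,
        (∑ j, eigsDec ρ1 j * Real.log (eigsDec ρ1 j / eigsDec ρ2 j)) ≤
            relEntropy ρ1 (U * ρ2 * Uᴴ) ∧
          relEntropy ρ1 (U * ρ2 * Uᴴ) ≤
            ∑ j, eigsDec ρ1 j * Real.log (eigsDec ρ1 j / eigsDec ρ2 j.rev)) ∧
      (∃ U ∈ Matrix.unitaryGroup (Fin n) ℂ,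
          relEntropy ρ1 (U * ρ2 * Uᴴ) =
            ∑ j, eigsDec ρ1 j * Real.log (eigsDec ρ1 j / eigsDec ρ2 j)) ∧
      ∃ U ∈ Matrix.unitaryGroup (Fin n) ℂ,
        relEntropy ρ1 (U * ρ2 * Uᴴ) =
          ∑ j, eigsDec ρ1 j * Real.log (eigsDec ρ1 j / eigsDec ρ2 j.rev) :=
  stmt_11_general ρ1 ρ2 h1' h2'
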